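/- Let 0 < λ < 1 and let π be an admissible pair configuration such that R(x,y) = 0 for all x,y ≥ 1. Then 2·∑_{x≥1} π(x)/x = λ; equivalently, q(0) = 1 − λ. -/

import Mathlib

open scoped BigOperators

/-- `π(x) = ∑_{y≥1} π(x,y)`, the row sum of a pair configuration. -/
noncomputable def rowSum (p : ℕ → ℕ → ℝ) (x : ℕ) : ℝ := ∑' y : ℕ, p x (y + 1)

/-- An admissible pair configuration: nonnegative, symmetric, vanishing when an
index is `0` (the boundary convention), with finite first moment and positive
row sums. -/
def AdmissiblePair (p : ℕ → ℕ → ℝ) : Prop :=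
  (∀ x y, 0 ≤ p x y) ∧ (∀ x y, p x y = p y x) ∧
    (∀ y, p 0 y = 0) ∧ (∀ x, p x 0 = 0) ∧
    Summable (fun xy : ℕ × ℕ => ((xy.1 : ℝ) + 1) * p (xy.1 + 1) (xy.2 + 1)) ∧
    (∀ x : ℕ, 1 ≤ x → 0 < rowSum p x)

/-- `h(x) = (x−1)·∑_{y≥1} π(x,y)/(y·π(x))`. -/
noncomputable def hPS (p : ℕ → ℕ → ℝ) (x : ℕ) : ℝ :=
  ((x : ℝ) - 1) * ∑' y : ℕ, p x (y + 1) / (((y : ℝ) + 1) * rowSum p x)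

/-- `q(x) = 2π(x)/x` for `x ≥ 1` and `q(0) = 1 − ∑_{x≥1} q(x)`. -/
noncomputable def qPS (p : ℕ → ℕ → ℝ) (x : ℕ) : ℝ :=
  if x = 0 then 1 - ∑' z : ℕ, 2 * rowSum p (z + 1) / ((z : ℝ) + 1)
  else 2 * rowSum p x / (x : ℝ)

/-- The PS pair drift `R(x,y)`, for `x, y ≥ 1`. -/
noncomputable def RPS (lam : ℝ) (p : ℕ → ℕ → ℝ) (x y : ℕ) : ℝ :=
  lam * qPS p (x - 1) * qPS p (y - 1)
    + 2 * lam * (p (x - 1) y + p x (y - 1) - 2 * p x y)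
    + p (x + 1) y * (hPS p (x + 1) + (x : ℝ) / ((x : ℝ) + 1))
    + p x (y + 1) * (hPS p (y + 1) + (y : ℝ) / ((y : ℝ) + 1))
    - p x y * (2 + hPS p x + hPS p y)


/-
Summing the fixed-point equations `R(x,y) = 0` over all `x, y ≥ 1`: the drift splits as
`R(x,y) = S(x,y) + S(y,x)`, where `S` collects the `q ⊗ q` creation term at half weight, the
`x`-direction transport terms and `−π(x,y)/x`. The transport terms telescope in `x` (they vanish on
the boundary, using `h(1) = 0`), and `∑ q = 1` by the definition of `q(0)`, so `∑ S = λ/2 − ∑ π(x)/x`.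
Hence `0 = ∑ R = λ − 2 ∑ π(x)/x`. The sums converge because `0 ≤ h(x) ≤ x − 1` and `∑ x π(x,y) < ∞`.
-/

section ShiftFst

variable {α β : Type*} [TopologicalSpace α] {G : ℕ × β → α}

theorem hasSum_comp_succ_fst_iff [AddCommMonoid α] (h0 : ∀ b, G (0, b) = 0) {a : α} :
    HasSum (fun z : ℕ × β => G (z.1 + 1, z.2)) a ↔ HasSum G a := by
  have hinj : Function.Injective (fun z : ℕ × β => (z.1 + 1, z.2)) := by
    rintro ⟨a, b⟩ ⟨c, d⟩ h
    simp_all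
  refine hinj.hasSum_iff fun z hz => ?_
  obtain ⟨_ | n, b⟩ := z
  · exact h0 b
  · exact absurd ⟨(n, b), rfl⟩ hz

theorem hasSum_comp_succ_fst_sub_self [AddCommGroup α] [IsTopologicalAddGroup α]
    (hG : Summable G) (h0 : ∀ b, G (0, b) = 0) :
    HasSum (fun z : ℕ × β => G (z.1 + 1, z.2) - G z) 0 := by
  simpa using ((hasSum_comp_succ_fst_iff h0).mpr hG.hasSum).sub hG.hasSum

end ShiftFst

theorem tsum_div_succ_mul_tsum_mem_Icc {u : ℕ → ℝ} (hu : ∀ n, 0 ≤ u n) (hs : Summable u) :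
    ∑' n, u n / ((n + 1) * ∑' m, u m) ∈ Set.Icc 0 1 := by
  have hsum_nonneg : 0 ≤ ∑' m, u m := tsum_nonneg hu
  have hdiv : ∀ n, u n / (n + 1) ≤ u n := fun n =>
    div_le_self (hu n) (by simp)
  have hdiv_nonneg : ∀ n, 0 ≤ u n / ((n : ℝ) + 1) := fun n => div_nonneg (hu n) (by positivity)
  have hle : ∑' n, u n / ((n : ℝ) + 1) ≤ ∑' m, u m :=
    (hs.of_nonneg_of_le hdiv_nonneg hdiv).tsum_le_tsum hdiv hs
  simp_rw [← div_div, tsum_div_const]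
  exact ⟨div_nonneg (tsum_nonneg hdiv_nonneg) hsum_nonneg, div_le_one_of_le₀ hle hsum_nonneg⟩

lemma hPS_one (p : ℕ → ℕ → ℝ) : hPS p 1 = 0 := by simp [hPS]

lemma qPS_zero (p : ℕ → ℕ → ℝ) :
    qPS p 0 = 1 - 2 * ∑' x : ℕ, rowSum p (x + 1) / ((x : ℝ) + 1) := by
  rw [qPS, if_pos rfl]
  simp_rw [mul_div_assoc, tsum_mul_left]

lemma hasSum_qPS {p : ℕ → ℕ → ℝ} (h : Summable fun x : ℕ => rowSum p (x + 1) / ((x : ℝ) + 1)) :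
    HasSum (qPS p) 1 := by
  refine (hasSum_nat_add_iff' 1).mp ?_
  have hsucc : (fun x : ℕ => qPS p (x + 1)) = fun x => 2 * (rowSum p (x + 1) / ((x : ℝ) + 1)) := by
    funext x
    simp only [qPS, Nat.succ_ne_zero, if_false]
    push_cast
    ring
  rw [hsucc, Finset.sum_range_one, qPS_zero, sub_sub_cancel]
  exact h.hasSum.mul_left 2

lemma hasSum_qPS_mul_qPS {p : ℕ → ℕ → ℝ}
    (h : Summable fun x : ℕ => rowSum p (x + 1) / ((x : ℝ) + 1)) :
    HasSum (fun z : ℕ × ℕ => qPS p z.1 * qPS p z.2) 1 := by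
  have hq := hasSum_qPS h
  simpa using hq.mul hq (summable_mul_of_summable_norm hq.summable.norm hq.summable.norm)

/-- The rate of transport from the pair `(x+1, y+1)` down to `(x, y+1)`. Here, as in
`halfDriftPS`, the index `(x, y)` stands for the pair `(x+1, y+1)`. -/
noncomputable def outflowPS (p : ℕ → ℕ → ℝ) (x y : ℕ) : ℝ :=
  p (x + 1) (y + 1) * (hPS p (x + 1) + (x : ℝ) / ((x : ℝ) + 1))

noncomputable def halfDriftPS (lam : ℝ) (p : ℕ → ℕ → ℝ) (x y : ℕ) : ℝ :=
  lam / 2 * (qPS p x * qPS p y) + 2 * lam * (p x (y + 1) - p (x + 1) (y + 1))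
    + (outflowPS p (x + 1) y - outflowPS p x y) - p (x + 1) (y + 1) / ((x : ℝ) + 1)

lemma RPS_succ_succ_eq_halfDriftPS_add {p : ℕ → ℕ → ℝ} (hsym : ∀ x y, p x y = p y x)
    (lam : ℝ) (x y : ℕ) :
    RPS lam p (x + 1) (y + 1) = halfDriftPS lam p x y + halfDriftPS lam p y x := by
  simp only [RPS, halfDriftPS, outflowPS, Nat.add_sub_cancel]
  rw [hsym (y + 1) (x + 1), hsym y (x + 1), hsym (y + 1 + 1) (x + 1)]
  push_cast
  field_simp
  ring

namespace AdmissiblePair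

variable {p : ℕ → ℕ → ℝ} (hp : AdmissiblePair p)
include hp

lemma summable_succ_succ : Summable fun z : ℕ × ℕ => p (z.1 + 1) (z.2 + 1) := by
  obtain ⟨hnonneg, -, -, -, hmoment, -⟩ := hp
  exact hmoment.of_nonneg_of_le (fun z => hnonneg _ _)
    fun z => le_mul_of_one_le_left (hnonneg _ _) (by simp)

lemma hPS_succ_mem_Icc (x : ℕ) : hPS p (x + 1) ∈ Set.Icc 0 (x : ℝ) := by
  obtain ⟨h0, h1⟩ := tsum_div_succ_mul_tsum_mem_Icc (fun y => hp.1 (x + 1) (y + 1))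
    (hp.summable_succ_succ.prod_factor x)
  have hx : (0 : ℝ) ≤ x := x.cast_nonneg
  simp only [hPS, Nat.cast_add, Nat.cast_one, add_sub_cancel_right]
  exact ⟨mul_nonneg hx h0, mul_le_of_le_one_right hx h1⟩

lemma summable_div_succ_fst :
    Summable fun z : ℕ × ℕ => p (z.1 + 1) (z.2 + 1) / ((z.1 : ℝ) + 1) :=
  hp.summable_succ_succ.of_nonneg_of_le (fun z => div_nonneg (hp.1 _ _) (by positivity))
    fun z => div_le_self (hp.1 _ _) (by simp)

lemma hasSum_rowSum_div_succ :
    HasSum (fun x : ℕ => rowSum p (x + 1) / ((x : ℝ) + 1))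
      (∑' z : ℕ × ℕ, p (z.1 + 1) (z.2 + 1) / ((z.1 : ℝ) + 1)) :=
  hp.summable_div_succ_fst.hasSum.prod_fiberwise fun x =>
    (hp.summable_succ_succ.prod_factor x).hasSum.div_const ((x : ℝ) + 1)

lemma hasSum_div_succ_fst :
    HasSum (fun z : ℕ × ℕ => p (z.1 + 1) (z.2 + 1) / ((z.1 : ℝ) + 1))
      (∑' x : ℕ, rowSum p (x + 1) / ((x : ℝ) + 1)) := by
  rw [hp.hasSum_rowSum_div_succ.tsum_eq]
  exact hp.summable_div_succ_fst.hasSum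

lemma summable_outflowPS : Summable fun z : ℕ × ℕ => outflowPS p z.1 z.2 := by
  have hrate : ∀ x : ℕ, hPS p (x + 1) + (x : ℝ) / ((x : ℝ) + 1) ∈ Set.Icc 0 ((x : ℝ) + 1) := by
    intro x
    obtain ⟨hh0, hh1⟩ := hp.hPS_succ_mem_Icc x
    have hfrac : (x : ℝ) / ((x : ℝ) + 1) ≤ 1 := div_le_one_of_le₀ (by linarith) (by positivity)
    exact ⟨add_nonneg hh0 (by positivity), by linarith⟩
  obtain ⟨hnonneg, -, -, -, hmoment, -⟩ := hp
  refine hmoment.of_nonneg_of_le (fun z => ?_) (fun z => ?_)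
  · exact mul_nonneg (hnonneg _ _) (hrate z.1).1
  · rw [outflowPS, mul_comm]
    exact mul_le_mul_of_nonneg_right (hrate z.1).2 (hnonneg _ _)

lemma hasSum_halfDriftPS (lam : ℝ) :
    HasSum (fun z : ℕ × ℕ => halfDriftPS lam p z.1 z.2)
      (lam / 2 - ∑' x : ℕ, rowSum p (x + 1) / ((x : ℝ) + 1)) := by
  have hcreate := (hasSum_qPS_mul_qPS hp.hasSum_rowSum_div_succ.summable).mul_left (lam / 2)
  have hp0 : ∀ y, p 0 (y + 1) = 0 := fun y => hp.2.2.1 _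
  have hinflow : Summable fun z : ℕ × ℕ => p z.1 (z.2 + 1) :=
    ((hasSum_comp_succ_fst_iff (G := fun z : ℕ × ℕ => p z.1 (z.2 + 1)) hp0).mp
      hp.summable_succ_succ.hasSum).summable
  have htransport := (hasSum_comp_succ_fst_sub_self hinflow hp0).mul_left (-(2 * lam))
  have houtflow := hasSum_comp_succ_fst_sub_self hp.summable_outflowPS
    fun y => by simp [outflowPS, hPS_one]
  have hsum := ((hcreate.add htransport).add houtflow).sub hp.hasSum_div_succ_fst
  rw [mul_one, mul_zero, add_zero, add_zero] at hsum
  refine (congrArg (HasSum · _) (funext fun z => ?_)).mpr hsum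
  simp only [halfDriftPS]
  ring

end AdmissiblePair

theorem ps_pair_fixed_point_q_zero_general
    (lam : ℝ) (p : ℕ → ℕ → ℝ) (hp : AdmissiblePair p)
    (hfix : ∀ x y : ℕ, 1 ≤ x → 1 ≤ y → RPS lam p x y = 0) :
    2 * (∑' x : ℕ, rowSum p (x + 1) / ((x : ℝ) + 1)) = lam ∧
    qPS p 0 = 1 - lam := by
  set t := ∑' x : ℕ, rowSum p (x + 1) / ((x : ℝ) + 1)
  have hS := hp.hasSum_halfDriftPS lam
  have hR : HasSum (fun z : ℕ × ℕ => RPS lam p (z.1 + 1) (z.2 + 1)) (lam - 2 * t) := by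
    convert hS.add ((Equiv.prodComm ℕ ℕ).hasSum_iff.mpr hS) using 1
    · funext z
      exact RPS_succ_succ_eq_halfDriftPS_add hp.2.1 lam z.1 z.2
    · ring
  have hzero : HasSum (fun z : ℕ × ℕ => RPS lam p (z.1 + 1) (z.2 + 1)) 0 := by
    simp [hfix]
  have ht : 2 * t = lam := by linarith [hR.unique hzero]
  exact ⟨ht, by rw [qPS_zero, ht]⟩

theorem ps_pair_fixed_point_q_zero
    (lam : ℝ) (hlam0 : 0 < lam) (hlam1 : lam < 1)
    (p : ℕ → ℕ → ℝ) (hp : AdmissiblePair p)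
    (hfix : ∀ x y : ℕ, 1 ≤ x → 1 ≤ y → RPS lam p x y = 0) :
    2 * (∑' x : ℕ, rowSum p (x + 1) / ((x : ℝ) + 1)) = lam ∧
    qPS p 0 = 1 - lam :=
  ps_pair_fixed_point_q_zero_general lam p hp hfix
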